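/- arXiv:2111.02008 — 5 statements merged into one kernel-verified Lean document; each statement's English description precedes it below -/
import Mathlib

section
/- For every n and k with k < n, there exists a family F of subsets of [n] such that every set in F has size at least 2, |F| ≤ k^{O(1)} · log n, and for every nonempty subset S ⊆ [n] with |S| ≤ k, there exists S' ∈ F with |S ∩ S'| = 1. -/
/-!
Colour `[n]` at random with `q = 2k` colours and take the class of colour `0`. For a fixed
nonempty `S` with `|S| ≤ k` and a point `y ∉ S`, the colourings giving colour `0` to one chosen
point of `S` and to `y`, and a nonzero colour to the rest of `S`, have density
`q⁻² (1 - 1/q)^(|S|-1) ≥ 1/(2q²)` by Bernoulli's inequality; their colour-`0` class meets `S` in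
exactly one point and has at least two elements. Indexing the sets `S` by the `n^k` tuples
`Fin k → Fin n`, a union bound shows that `2q² · k (log₂ n + 1)` colourings serve every `S`,
since `(1 - 1/r)^r ≤ 1/2`.
-/

open Finset

theorem Finset.exists_fin_image_eq {α : Type*} [DecidableEq α] {s : Finset α} {k : ℕ}
    (hs : s.Nonempty) (hk : #s ≤ k) : ∃ f : Fin k → α, univ.image f = s := by
  have : Nonempty s := hs.to_subtype
  obtain ⟨e⟩ : Nonempty (s ↪ Fin k) := Function.Embedding.nonempty_of_card_le (by simpa)
  refine ⟨Subtype.val ∘ Function.invFun e, ?_⟩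
  rw [← image_image, image_univ_of_surjective (Function.invFun_surjective e.injective),
    univ_eq_attach, attach_image_val]

theorem Nat.pow_le_two_mul_sub_one_pow {q j : ℕ} (h : 2 * j ≤ q) :
    q ^ j ≤ 2 * (q - 1) ^ j := by
  rcases Nat.eq_zero_or_pos q with rfl | hq
  · simp [show j = 0 by omega]
  have hq' : (1 : ℝ) ≤ q := by exact_mod_cast hq
  have hbern : 1 + j * -(q : ℝ)⁻¹ ≤ (1 + -(q : ℝ)⁻¹) ^ j :=
    one_add_mul_le_pow (by linarith [inv_le_one_of_one_le₀ hq']) j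
  have hhalf : (1 : ℝ) / 2 ≤ 1 + j * -(q : ℝ)⁻¹ := by
    have : (j : ℝ) * (q : ℝ)⁻¹ ≤ 1 / 2 := by
      rw [← div_eq_mul_inv, div_le_iff₀ (by linarith)]
      have : (2 * j : ℝ) ≤ q := by exact_mod_cast h
      linarith
    linarith
  have hfactor : ((q - 1 : ℕ) : ℝ) ^ j = q ^ j * (1 + -(q : ℝ)⁻¹) ^ j := by
    rw [← mul_pow, Nat.cast_sub hq, Nat.cast_one]
    congr 1
    field_simp
    ring
  have : (q : ℝ) ^ j ≤ 2 * ((q - 1 : ℕ) : ℝ) ^ j := by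
    rw [hfactor]
    nlinarith [pow_pos (show (0 : ℝ) < q by linarith) j]
  exact_mod_cast this

theorem Real.one_sub_inv_pow_le_half {r : ℕ} (hr : 0 < r) : (1 - (r : ℝ)⁻¹) ^ r ≤ 1 / 2 := by
  have hexp := Real.one_sub_div_pow_le_exp_neg (n := r) (t := 1) (by exact_mod_cast hr)
  have hhalf : Real.exp (-1) ≤ 1 / 2 := by
    rw [Real.exp_neg, one_div]
    exact inv_anti₀ two_pos (by linarith [Real.exp_one_gt_d9])
  simpa [one_div] using hexp.trans hhalf

section UnionBound

variable {ι Ω : Type*} [Fintype ι] [Fintype Ω]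

theorem exists_forall_exists_mem_of_sum_card_compl_pow_lt [DecidableEq Ω] (G : ι → Finset Ω)
    (m : ℕ) (h : ∑ i, (Fintype.card Ω - #(G i)) ^ m < Fintype.card Ω ^ m) :
    ∃ ω : Fin m → Ω, ∀ i, ∃ j, ω j ∈ G i := by
  by_contra! hbad
  have hcover : (univ : Finset (Fin m → Ω)) ⊆
      univ.biUnion fun i => Fintype.piFinset fun _ => (G i)ᶜ := by
    intro ω _
    obtain ⟨i, hi⟩ := hbad ω
    simpa [Fintype.mem_piFinset] using ⟨i, hi⟩
  refine h.not_ge ?_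
  calc Fintype.card Ω ^ m = #(univ : Finset (Fin m → Ω)) := by simp
    _ ≤ _ := card_le_card hcover
    _ ≤ _ := card_biUnion_le
    _ = _ := by simp [Fintype.card_piFinset, card_compl]

theorem sum_card_compl_pow_lt [Nonempty Ω] (G : ι → Finset Ω) {r M : ℕ}
    (hG : ∀ i, Fintype.card Ω ≤ r * #(G i)) (hι : Fintype.card ι < 2 ^ M) :
    ∑ i, (Fintype.card Ω - #(G i)) ^ (r * M) < Fintype.card Ω ^ (r * M) := by
  set N := Fintype.card Ω
  have hN : 0 < N := Fintype.card_pos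
  rcases isEmpty_or_nonempty ι with hι₀ | ⟨⟨i₀⟩⟩
  · simpa using pow_pos hN _
  have hr : 0 < r := Nat.pos_of_mul_pos_right (hN.trans_le (hG i₀))
  have hterm : ∀ i, (((N - #(G i) : ℕ) : ℝ)) ^ (r * M) ≤ (N : ℝ) ^ (r * M) * (1 / 2) ^ M := by
    intro i
    have hle : ((N - #(G i) : ℕ) : ℝ) ≤ N * (1 - (r : ℝ)⁻¹) := by
      have : (N : ℝ) ≤ r * #(G i) := by exact_mod_cast hG i
      have : (N : ℝ) / r ≤ #(G i) := by
        rw [div_le_iff₀ (by exact_mod_cast hr)]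
        linarith
      rw [Nat.cast_sub (card_le_univ (G i)), mul_one_sub, ← div_eq_mul_inv]
      linarith
    calc (((N - #(G i) : ℕ) : ℝ)) ^ (r * M) ≤ (N * (1 - (r : ℝ)⁻¹)) ^ (r * M) :=
          pow_le_pow_left₀ (Nat.cast_nonneg _) hle _
      _ = (N : ℝ) ^ (r * M) * ((1 - (r : ℝ)⁻¹) ^ r) ^ M := by rw [mul_pow, pow_mul (1 - _)]
      _ ≤ (N : ℝ) ^ (r * M) * (1 / 2) ^ M := by
          gcongr
          · exact pow_nonneg (sub_nonneg.mpr (inv_le_one_of_one_le₀ (by exact_mod_cast hr))) r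
          · exact Real.one_sub_inv_pow_le_half hr
  have hι' : (Fintype.card ι : ℝ) * (1 / 2) ^ M < 1 := by
    rw [one_div_pow, ← div_eq_mul_one_div, div_lt_one (by positivity)]
    exact_mod_cast hι
  have : ∑ i, (((N - #(G i) : ℕ) : ℝ)) ^ (r * M) < (N : ℝ) ^ (r * M) :=
    calc ∑ i, (((N - #(G i) : ℕ) : ℝ)) ^ (r * M)
        ≤ ∑ _i : ι, (N : ℝ) ^ (r * M) * (1 / 2) ^ M := sum_le_sum fun i _ => hterm i
      _ = (N : ℝ) ^ (r * M) * (Fintype.card ι * (1 / 2) ^ M) := by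
          rw [sum_const, card_univ, nsmul_eq_mul]; ring
      _ < (N : ℝ) ^ (r * M) := mul_lt_of_lt_one_right (by positivity) hι'
  exact_mod_cast this

end UnionBound

section Colorings

variable {α : Type*} [Fintype α] [DecidableEq α]

def isolatingColorings (q : ℕ) [NeZero q] (S : Finset α) : Finset (α → Fin q) :=
  {g | 2 ≤ #({x | g x = 0} : Finset α) ∧ #(S ∩ ({x | g x = 0} : Finset α)) = 1}

theorem card_le_two_mul_sq_mul_card_isolatingColorings {q : ℕ} [NeZero q] {S : Finset α}
    (hS : S.Nonempty) (hSα : #S < Fintype.card α) (hq : 2 * #S ≤ q) :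
    Fintype.card (α → Fin q) ≤ 2 * q ^ 2 * #(isolatingColorings q S) := by
  obtain ⟨x₀, hx₀⟩ := hS
  obtain ⟨y₀, -, hy₀⟩ :=
    exists_mem_notMem_of_card_lt_card (s := S) (t := univ) (by rwa [card_univ])
  have hxy : x₀ ≠ y₀ := by rintro rfl; exact hy₀ hx₀
  set P : Finset α := {x₀, y₀}
  let T : α → Finset (Fin q) := fun x => if x ∈ P then {0} else if x ∈ S then {0}ᶜ else univ
  have hsub : Fintype.piFinset T ⊆ isolatingColorings q S := by
    intro g hg
    rw [Fintype.mem_piFinset] at hg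
    have hzero : ∀ x ∈ P, g x = 0 := fun x hx => by simpa [T, hx] using hg x
    have hnonzero : ∀ x ∈ S, x ≠ x₀ → g x ≠ 0 := fun x hx hne => by
      have hxP : x ∉ P := by simp [P, hne]; rintro rfl; exact hy₀ hx
      simpa [T, hxP, hx] using hg x
    have hiso : S ∩ ({x | g x = 0} : Finset α) = {x₀} := by
      ext x
      simp only [mem_inter, mem_filter, mem_univ, true_and, mem_singleton]
      exact ⟨fun ⟨hx, h0⟩ => by_contra fun hne => hnonzero x hx hne h0,
        fun h => ⟨h ▸ hx₀, h ▸ hzero x₀ (by simp [P])⟩⟩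
    have htwo : P ⊆ ({x | g x = 0} : Finset α) := fun x hx => by simpa using hzero x hx
    simp only [isolatingColorings, mem_filter, mem_univ, true_and, hiso, card_singleton,
      and_true]
    exact (card_pair hxy).symm.le.trans (card_le_card htwo)
  have hcount : Fintype.card (α → Fin q) ≤ 2 * q ^ 2 * #(Fintype.piFinset T) := by
    have hT : ∀ x, #(T x) = if x ∈ P then 1 else if x ∈ S then q - 1 else q := by
      intro x
      by_cases h₁ : x ∈ P <;> by_cases h₂ : x ∈ S <;> simp [T, h₁, h₂, card_compl]
    have hall : Fintype.card (α → Fin q) =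
        ∏ x : α, if x ∈ P then q else if x ∈ S then q else q := by
      simp
    rw [Fintype.card_piFinset, prod_congr rfl fun x _ => hT x, hall, prod_ite, prod_ite,
      prod_ite, prod_ite]
    simp only [prod_const, one_pow, one_mul]
    have hP : #({x | x ∈ P} : Finset α) ≤ 2 :=
      (card_le_card fun x hx => (mem_filter.mp hx).2).trans card_le_two
    have hSP : 2 * #({x ∈ {x | x ∉ P} | x ∈ S} : Finset α) ≤ q :=
      le_trans (Nat.mul_le_mul_left 2 (card_le_card fun x hx => (mem_filter.mp hx).2)) hq
    calc _ ≤ q ^ 2 * (2 * (q - 1) ^ #({x ∈ {x | x ∉ P} | x ∈ S} : Finset α) * _) :=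
          Nat.mul_le_mul (Nat.pow_le_pow_right (NeZero.pos q) hP)
            (Nat.mul_le_mul_right _ (Nat.pow_le_two_mul_sub_one_pow hSP))
      _ = _ := by ring
  exact hcount.trans (Nat.mul_le_mul_left _ (card_le_card hsub))

end Colorings

/-- For every `n` and `k` with `k < n`, there is a family `F` of subsets of `[n]`,
all of size at least 2, with `|F| ≤ k^{O(1)} · log n`, such that every nonempty `S ⊆ [n]` with
`|S| ≤ k` is isolated by some member of `F` (intersection of size exactly one). -/
theorem unbalanced_isolating_family :
    ∃ C : ℕ, ∀ n k : ℕ, k < n →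
      ∃ F : Finset (Finset (Fin n)),
        (∀ A ∈ F, 2 ≤ A.card) ∧
        F.card ≤ C * k ^ C * (Nat.log 2 n + 1) ∧
        ∀ S : Finset (Fin n), S.Nonempty → S.card ≤ k →
          ∃ A ∈ F, (S ∩ A).card = 1 := by
  refine ⟨8, fun n k hkn => ?_⟩
  rcases Nat.eq_zero_or_pos k with rfl | hk
  · exact ⟨∅, by simp, by simp, fun S hS hSk =>
      absurd (card_eq_zero.mp (Nat.le_zero.mp hSk)) hS.ne_empty⟩
  have : NeZero (2 * k) := ⟨by omega⟩
  have : Nonempty (Fin k) := ⟨⟨0, hk⟩⟩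
  let G : (Fin k → Fin n) → Finset (Fin n → Fin (2 * k)) :=
    fun f => isolatingColorings (2 * k) (univ.image f)
  have hG : ∀ f, Fintype.card (Fin n → Fin (2 * k)) ≤ 2 * (2 * k) ^ 2 * #(G f) := fun f =>
    card_le_two_mul_sq_mul_card_isolatingColorings (univ_nonempty.image f)
      ((card_image_le.trans_eq (card_fin k)).trans_lt (by simpa using hkn))
      (Nat.mul_le_mul_left 2 (card_image_le.trans_eq (card_fin k)))
  have hcard : Fintype.card (Fin k → Fin n) < 2 ^ ((Nat.log 2 n + 1) * k) := by
    rw [pow_mul]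
    simpa using Nat.pow_lt_pow_left (Nat.lt_pow_succ_log_self one_lt_two n) hk.ne'
  obtain ⟨ω, hω⟩ := exists_forall_exists_mem_of_sum_card_compl_pow_lt G _
    (sum_card_compl_pow_lt G hG hcard)
  refine ⟨(univ.image fun j => ({x | ω j x = 0} : Finset (Fin n))).filter (2 ≤ #·),
    fun A hA => (mem_filter.mp hA).2, ?_, fun S hS hSk => ?_⟩
  · calc _ ≤ 2 * (2 * k) ^ 2 * ((Nat.log 2 n + 1) * k) :=
          (card_filter_le _ _).trans (card_image_le.trans_eq (card_fin _))
      _ = 8 * k ^ 3 * (Nat.log 2 n + 1) := by ring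
      _ ≤ 8 * k ^ 8 * (Nat.log 2 n + 1) := by gcongr; omega
  · obtain ⟨f, rfl⟩ := exists_fin_image_eq hS hSk
    obtain ⟨j, hj⟩ := hω f
    simp only [G, isolatingColorings, mem_filter, mem_univ, true_and] at hj
    exact ⟨_, mem_filter.mpr ⟨mem_image_of_mem _ (mem_univ j), hj.1⟩, hj.2⟩
end

section
/- Let G = (V, E, w) be a weighted graph, let U ⊆ V, let λ̃ > 0, and define demands d(v) = λ̃ for v ∈ U and d(v) = 0 otherwise. Suppose V is partitioned into clusters V₁,...,V_ℓ such that each induced subgraph G[Vᵢ] is a (φ, dᵢ)-expander, where dᵢ(v) = d(v) + w(E({v}, V \ Vᵢ)). Then for any partition (A, B) of V, with Uᵢ = Vᵢ ∩ U: ∑ᵢ min{|Uᵢ ∩ A|, |Uᵢ ∩ B|} ≤ w(E(A,B)) / (φ · λ̃). -/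
open Finset

/-- Total weight of (ordered) edges from `X` to `Y`. -/
noncomputable def edgeW {V : Type*} [Fintype V] [DecidableEq V]
    (w : V → V → ℝ) (X Y : Finset V) : ℝ :=
  ∑ u ∈ X, ∑ v ∈ Y, w u v

/-- If each cluster `Vᵢ` induces a `(φ, dᵢ)`-expander, where `dᵢ(v) = d(v) +
w(E({v}, V \ Vᵢ))` and `d = λ̃·𝟙_U`, then for any partition `(A, Aᶜ)` of `V`,
`∑ᵢ min{|Uᵢ ∩ A|, |Uᵢ ∩ Aᶜ|} ≤ w(E(A, Aᶜ)) / (φ·λ̃)`. -/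
theorem expander_decomposition_cut_bound (V : Type*) [Fintype V] [DecidableEq V]
    (w : V → V → ℝ) (hw : ∀ u v, 0 ≤ w u v) (hsymm : ∀ u v, w u v = w v u)
    (U : Finset V) (lam : ℝ) (hlam : 0 < lam)
    (φ : ℝ) (hφ : 0 < φ)
    (ℓ : ℕ) (c : V → Fin ℓ)
    (d : V → ℝ) (hd : ∀ v, d v = if v ∈ U then lam else 0)
    (hexp : ∀ i : Fin ℓ, ∀ S ⊆ Finset.univ.filter (fun v => c v = i),
      φ * min (∑ v ∈ S, (d v + edgeW w {v} (Finset.univ.filter (fun v => c v = i))ᶜ))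
              (∑ v ∈ Finset.univ.filter (fun v => c v = i) \ S,
                (d v + edgeW w {v} (Finset.univ.filter (fun v => c v = i))ᶜ))
        ≤ edgeW w S (Finset.univ.filter (fun v => c v = i) \ S))
    (A : Finset V) :
    ∑ i : Fin ℓ,
        ((min ((Finset.univ.filter (fun v => c v = i) ∩ U ∩ A).card)
              ((Finset.univ.filter (fun v => c v = i) ∩ U ∩ Aᶜ).card) : ℕ) : ℝ)
      ≤ edgeW w A Aᶜ / (φ * lam) := by
  have hφl : 0 < φ * lam := mul_pos hφ hlam
  rw [le_div_iff₀ hφl, Finset.sum_mul]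
  have key : ∀ i : Fin ℓ,
      ((min ((Finset.univ.filter (fun v => c v = i) ∩ U ∩ A).card)
            ((Finset.univ.filter (fun v => c v = i) ∩ U ∩ Aᶜ).card) : ℕ) : ℝ) * (φ * lam)
      ≤ edgeW w (Finset.univ.filter (fun v => c v = i) ∩ A)
          (Finset.univ.filter (fun v => c v = i) \ A) := by
    intro i
    set Vi := Finset.univ.filter (fun v => c v = i) with hVi
    have h := hexp i (Vi ∩ A) inter_subset_left
    rw [sdiff_inter_self_left] at h
    refine le_trans ?_ h
    have he : ∀ S : Finset V, lam * ((S ∩ U).card : ℝ) ≤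
        ∑ v ∈ S, (d v + edgeW w {v} Viᶜ) := by
      intro S
      have h1 : ∑ v ∈ S, d v = lam * ((S ∩ U).card : ℝ) := by
        simp only [hd]
        rw [Finset.sum_ite_mem, Finset.sum_const, nsmul_eq_mul, mul_comm]
      calc lam * ((S ∩ U).card : ℝ) = ∑ v ∈ S, d v := h1.symm
        _ ≤ ∑ v ∈ S, (d v + edgeW w {v} Viᶜ) := by
            refine Finset.sum_le_sum fun v _ => ?_
            have : 0 ≤ edgeW w {v} Viᶜ := by
              refine Finset.sum_nonneg fun a _ => Finset.sum_nonneg fun b _ => hw a b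
            linarith
    have hA : ((Vi ∩ A) ∩ U) = Vi ∩ U ∩ A := by rw [inter_right_comm]
    have hB : ((Vi \ A) ∩ U) = Vi ∩ U ∩ Aᶜ := by
      ext v; simp [Finset.mem_sdiff, Finset.mem_inter, Finset.mem_compl]; tauto
    have hmin : ((min ((Vi ∩ U ∩ A).card) ((Vi ∩ U ∩ Aᶜ).card) : ℕ) : ℝ) * (φ * lam)
        = φ * min (lam * (((Vi ∩ A) ∩ U).card : ℝ)) (lam * (((Vi \ A) ∩ U).card : ℝ)) := by
      rw [hA, hB]
      rw [← mul_min_of_nonneg _ _ hlam.le, Nat.cast_min]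
      ring
    rw [hmin]
    refine mul_le_mul_of_nonneg_left ?_ hφ.le
    exact le_min (le_trans (min_le_left _ _) (he _)) (le_trans (min_le_right _ _) (he _))
  calc ∑ i : Fin ℓ,
        ((min ((Finset.univ.filter (fun v => c v = i) ∩ U ∩ A).card)
              ((Finset.univ.filter (fun v => c v = i) ∩ U ∩ Aᶜ).card) : ℕ) : ℝ) * (φ * lam)
      ≤ ∑ i : Fin ℓ, edgeW w (Finset.univ.filter (fun v => c v = i) ∩ A)
          (Finset.univ.filter (fun v => c v = i) \ A) :=
        Finset.sum_le_sum fun i _ => key i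
    _ ≤ ∑ i : Fin ℓ, ∑ u ∈ A.filter (fun v => c v = i), ∑ v ∈ Aᶜ, w u v := by
        refine Finset.sum_le_sum fun i _ => ?_
        have hset : Finset.univ.filter (fun v => c v = i) ∩ A
            = A.filter (fun v => c v = i) := by
          ext v; simp [Finset.mem_inter, Finset.mem_filter, and_comm]
        rw [edgeW, hset]
        refine Finset.sum_le_sum fun u _ => ?_
        refine Finset.sum_le_sum_of_subset_of_nonneg ?_ (fun v _ _ => hw u v)
        intro v hv
        simp only [Finset.mem_sdiff] at hv
        simp [Finset.mem_compl, hv.2]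
    _ = ∑ u ∈ A, ∑ v ∈ Aᶜ, w u v := Finset.sum_fiberwise _ _ _
    _ = edgeW w A Aᶜ := rfl
end

section
/- Let φ ∈ (0, 1] and let G = (V, E, w) be a weighted graph with min-cut value λ > 0, U ⊆ V, and a partition of V into clusters V₁,...,V_ℓ with Uᵢ = Vᵢ ∩ U, satisfying: (a) each G[Vᵢ] is a (φ, dᵢ)-expander where dᵢ(v) = d(v) + w(E({v}, V\Vᵢ)) with d(v) = λ̃·1[v ∈ U] for some λ̃ ≥ λ; (b) the min-cut (S₁, S₂) makes U (1+1/φ)³-balanced. Construct U' by taking 1 arbitrary vertex from each Uᵢ with 1 ≤ |Uᵢ| ≤ 1/φ² and 1 + 1/φ arbitrary vertices from each Uᵢ with |Uᵢ| > 1/φ². Then S₁ ∩ U' ≠ ∅ and S₂ ∩ U' ≠ ∅. -/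
open Finset

/-- Weight of the cut `∂S`. -/
noncomputable def cutW {V : Type*} [Fintype V] [DecidableEq V]
    (w : V → V → ℝ) (S : Finset V) : ℝ :=
  edgeW w S Sᶜ

/-!
Let `T` be either side of the min-cut and suppose `T` misses `U'`. In every cluster
`Vᵢ` put `aᵢ = |T ∩ Uᵢ|` and `bᵢ = |Uᵢ \ T|`. Since vertices of `U` have degree at least `λ̃`,
the expansion of `Vᵢ` gives `φ λ̃ min(aᵢ, bᵢ) ≤ w(E(T ∩ Vᵢ, Vᵢ \ T))`, and these edge sets are
disjoint parts of the cut `∂T` of weight `λ ≤ λ̃`; hence `∑ᵢ min(aᵢ, bᵢ) ≤ 1/φ`.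
As `U'` hits every nonempty `Uᵢ` outside `T`, `aᵢ > 0` forces `bᵢ ≥ 1`, and `bᵢ > 1/φ` when `Uᵢ`
is large. So either `aᵢ ≤ bᵢ`, or `Uᵢ` is small and `aᵢ ≤ |Uᵢ| ≤ 1/φ² ≤ bᵢ/φ²`; in both cases
`aᵢ ≤ min(aᵢ, bᵢ)/φ²`. Summing, `|T ∩ U| ≤ 1/φ³ < (1 + 1/φ)³`, contradicting the balance.
-/

/-- Read `a, b, n, m` as `|T ∩ Uᵢ|, |Uᵢ \ T|, |Uᵢ|, |U' ∩ Uᵢ|` for a sample `U'` disjoint from `T`. -/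
lemma card_le_inv_sq_mul_min {φ : ℝ} (hφ : 0 < φ) (hφ1 : φ ≤ 1) {a b n m : ℕ}
    (han : a ≤ n) (hmb : m ≤ b) (hmin : min (a : ℝ) b ≤ 1 / φ)
    (hsmall : 1 ≤ n → (n : ℝ) ≤ 1 / φ ^ 2 → m = 1)
    (hlarge : 1 / φ ^ 2 < (n : ℝ) → 1 + 1 / φ ≤ (m : ℝ)) :
    (a : ℝ) ≤ 1 / φ ^ 2 * min (a : ℝ) b := by
  have hφ2 : 1 ≤ 1 / φ ^ 2 := by
    rw [le_div_iff₀ (by positivity)]; nlinarith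
  rcases Nat.eq_zero_or_pos a with rfl | ha
  · simp
  rcases le_or_gt (a : ℝ) b with hab | hba
  · rw [min_eq_left hab]
    nlinarith [(Nat.cast_nonneg a : (0 : ℝ) ≤ a)]
  rw [min_eq_right hba.le] at hmin ⊢
  rcases le_or_gt (n : ℝ) (1 / φ ^ 2) with hn | hn
  · have hb : (1 : ℝ) ≤ b := by exact_mod_cast (hsmall (ha.trans_le han) hn).symm.le.trans hmb
    calc (a : ℝ) ≤ n := by exact_mod_cast han
      _ ≤ 1 / φ ^ 2 := hn
      _ ≤ 1 / φ ^ 2 * b := le_mul_of_one_le_right (by positivity) hb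
  · have hm : 1 + 1 / φ ≤ (m : ℝ) := hlarge hn
    have hmb' : (m : ℝ) ≤ b := by exact_mod_cast hmb
    linarith

section

variable {V : Type*} [DecidableEq V]

lemma mul_card_inter_le_sum {f : V → ℝ} {a : ℝ} {U : Finset V} (hf : ∀ v, 0 ≤ f v)
    (hfU : ∀ v ∈ U, a ≤ f v) (S : Finset V) :
    a * #(S ∩ U) ≤ ∑ v ∈ S, f v := by
  calc a * #(S ∩ U) = ∑ _v ∈ S ∩ U, a := by rw [sum_const, nsmul_eq_mul, mul_comm]
    _ ≤ ∑ v ∈ S ∩ U, f v := sum_le_sum fun v hv => hfU v (mem_inter.mp hv).2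
    _ ≤ ∑ v ∈ S, f v := sum_le_sum_of_subset_of_nonneg inter_subset_left fun v _ _ => hf v

variable [Fintype V]

section EdgeWeights

variable {w : V → V → ℝ}

lemma edgeW_nonneg (hw : ∀ u v, 0 ≤ w u v) (X Y : Finset V) : 0 ≤ edgeW w X Y :=
  sum_nonneg fun _ _ => sum_nonneg fun _ _ => hw _ _

lemma edgeW_mono (hw : ∀ u v, 0 ≤ w u v) {X X' Y Y' : Finset V} (hX : X ⊆ X') (hY : Y ⊆ Y') :
    edgeW w X Y ≤ edgeW w X' Y' :=
  (sum_le_sum fun u _ => sum_le_sum_of_subset_of_nonneg hY fun v _ _ => hw u v).trans <|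
    sum_le_sum_of_subset_of_nonneg hX fun u _ _ => sum_nonneg fun v _ => hw u v

lemma sum_edgeW_filter {ι : Type*} [Fintype ι] [DecidableEq ι] (f : V → ι) (X Y : Finset V) :
    ∑ i, edgeW w (X.filter (f · = i)) Y = edgeW w X Y :=
  sum_fiberwise X f _

end EdgeWeights

def cluster {ι : Type*} [DecidableEq ι] (c : V → ι) (i : ι) : Finset V :=
  univ.filter (fun v => c v = i)

section Clusters

variable {ι : Type*} [Fintype ι] [DecidableEq ι] (c : V → ι)

lemma sum_edgeW_cluster_le_cutW {w : V → V → ℝ} (hw : ∀ u v, 0 ≤ w u v) (T : Finset V) :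
    ∑ i, edgeW w (cluster c i ∩ T) (cluster c i \ T) ≤ cutW w T := by
  calc ∑ i, edgeW w (cluster c i ∩ T) (cluster c i \ T)
      ≤ ∑ i, edgeW w (T.filter (c · = i)) Tᶜ := by
        gcongr with i
        refine edgeW_mono hw (fun v hv => ?_) (fun v hv => ?_)
        · simp_all [cluster]
        · simp_all
    _ = cutW w T := sum_edgeW_filter c T Tᶜ

lemma card_inter_eq_sum_card_inter_cluster (T U : Finset V) :
    #(T ∩ U) = ∑ i, #(T ∩ (cluster c i ∩ U)) := by
  rw [card_eq_sum_card_fiberwise fun v _ => mem_univ (c v)]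
  refine sum_congr rfl fun i _ => congrArg card ?_
  ext v
  simp only [mem_filter, mem_inter, cluster, mem_univ, true_and]
  tauto

end Clusters

lemma mul_min_card_le_edgeW_of_expander {w : V → V → ℝ} {C U : Finset V} {f : V → ℝ} {φ a : ℝ}
    (hφ : 0 ≤ φ) (ha : 0 ≤ a) (hf : ∀ v, 0 ≤ f v) (hfU : ∀ v ∈ U, a ≤ f v)
    (hC : ∀ S ⊆ C, φ * min (∑ v ∈ S, f v) (∑ v ∈ C \ S, f v) ≤ edgeW w S (C \ S))
    (T : Finset V) :
    φ * (a * min (#(T ∩ (C ∩ U)) : ℝ) #(Tᶜ ∩ (C ∩ U))) ≤ edgeW w (C ∩ T) (C \ T) := by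
  have hin : C ∩ T ∩ U = T ∩ (C ∩ U) := by ext; simp only [mem_inter]; tauto
  have hout : (C \ T) ∩ U = Tᶜ ∩ (C ∩ U) := by ext; simp only [mem_inter, mem_sdiff, mem_compl]; tauto
  have h := hC (C ∩ T) inter_subset_left
  rw [sdiff_inter_self_left] at h
  refine le_trans (mul_le_mul_of_nonneg_left ?_ hφ) h
  rw [mul_min_of_nonneg _ _ ha, ← hin, ← hout]
  exact min_le_min (mul_card_inter_le_sum hf hfU _) (mul_card_inter_le_sum hf hfU _)

section Decomposition

variable {ℓ : ℕ} (c : V → Fin ℓ) (U : Finset V)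

lemma sum_min_card_le_inv {w : V → V → ℝ} (hw : ∀ u v, 0 ≤ w u v) {φ lamt : ℝ} (hφ : 0 < φ)
    (hlamt : 0 < lamt) {d : V → ℝ} (hd : ∀ v, d v = if v ∈ U then lamt else 0)
    (hexp : ∀ i, ∀ S ⊆ cluster c i,
      φ * min (∑ v ∈ S, (d v + edgeW w {v} (cluster c i)ᶜ))
              (∑ v ∈ cluster c i \ S, (d v + edgeW w {v} (cluster c i)ᶜ))
        ≤ edgeW w S (cluster c i \ S))
    {T : Finset V} (hT : cutW w T ≤ lamt) :
    ∑ i, min (#(T ∩ (cluster c i ∩ U)) : ℝ) #(Tᶜ ∩ (cluster c i ∩ U)) ≤ 1 / φ := by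
  have hdeg : ∀ i v, 0 ≤ d v + edgeW w {v} (cluster c i)ᶜ := fun i v =>
    add_nonneg (by rw [hd]; split_ifs <;> positivity) (edgeW_nonneg hw _ _)
  have hdegU : ∀ i, ∀ v ∈ U, lamt ≤ d v + edgeW w {v} (cluster c i)ᶜ := fun i v hv => by
    rw [hd, if_pos hv]; exact le_add_of_nonneg_right (edgeW_nonneg hw _ _)
  have h : φ * (lamt * ∑ i, min (#(T ∩ (cluster c i ∩ U)) : ℝ) #(Tᶜ ∩ (cluster c i ∩ U)))
      ≤ φ * (lamt * (1 / φ)) := by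
    calc _ = ∑ i, φ * (lamt * min (#(T ∩ (cluster c i ∩ U)) : ℝ) #(Tᶜ ∩ (cluster c i ∩ U))) := by
          rw [mul_sum, mul_sum]
      _ ≤ ∑ i, edgeW w (cluster c i ∩ T) (cluster c i \ T) := sum_le_sum fun i _ =>
          mul_min_card_le_edgeW_of_expander hφ.le hlamt.le (hdeg i) (hdegU i) (hexp i) T
      _ ≤ lamt := (sum_edgeW_cluster_le_cutW c hw T).trans hT
      _ = φ * (lamt * (1 / φ)) := by field_simp
  exact le_of_mul_le_mul_left (le_of_mul_le_mul_left h hφ) hlamt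

lemma inter_nonempty_of_sum_min_card_le {φ : ℝ} (hφ : 0 < φ) (hφ1 : φ ≤ 1) {T U' : Finset V}
    (hsum : ∑ i, min (#(T ∩ (cluster c i ∩ U)) : ℝ) #(Tᶜ ∩ (cluster c i ∩ U)) ≤ 1 / φ)
    (hbal : (1 + 1 / φ) ^ 3 ≤ (#(T ∩ U) : ℝ))
    (hsmall : ∀ i, 1 ≤ #(cluster c i ∩ U) → (#(cluster c i ∩ U) : ℝ) ≤ 1 / φ ^ 2 →
      #(U' ∩ (cluster c i ∩ U)) = 1)
    (hlarge : ∀ i, 1 / φ ^ 2 < (#(cluster c i ∩ U) : ℝ) →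
      1 + 1 / φ ≤ (#(U' ∩ (cluster c i ∩ U)) : ℝ)) :
    (T ∩ U').Nonempty := by
  by_contra hTU'
  have hcluster : ∀ i, (#(T ∩ (cluster c i ∩ U)) : ℝ)
      ≤ 1 / φ ^ 2 * min (#(T ∩ (cluster c i ∩ U)) : ℝ) #(Tᶜ ∩ (cluster c i ∩ U)) := by
    intro i
    refine card_le_inv_sq_mul_min hφ hφ1 (card_le_card inter_subset_right) (card_le_card ?_)
      ((single_le_sum (fun j _ => by positivity) (mem_univ i)).trans hsum) (hsmall i) (hlarge i)
    intro v hv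
    have hvT : v ∉ T := fun hvT => hTU' ⟨v, mem_inter.mpr ⟨hvT, (mem_inter.mp hv).1⟩⟩
    exact mem_inter.mpr ⟨mem_compl.mpr hvT, (mem_inter.mp hv).2⟩
  have hcube : 1 / φ ^ 2 * (1 / φ) < (1 + 1 / φ) ^ 3 := by
    have hx : 0 < 1 / φ := by positivity
    rw [← one_div_pow]
    nlinarith [pow_pos hx 2]
  have : (#(T ∩ U) : ℝ) ≤ 1 / φ ^ 2 * (1 / φ) := by
    calc (#(T ∩ U) : ℝ) = ∑ i, (#(T ∩ (cluster c i ∩ U)) : ℝ) := by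
          rw [card_inter_eq_sum_card_inter_cluster c, Nat.cast_sum]
      _ ≤ ∑ i, 1 / φ ^ 2 * min (#(T ∩ (cluster c i ∩ U)) : ℝ) #(Tᶜ ∩ (cluster c i ∩ U)) :=
          sum_le_sum fun i _ => hcluster i
      _ ≤ 1 / φ ^ 2 * (1 / φ) := by rw [← mul_sum]; gcongr
  linarith

end Decomposition

end

theorem sparsified_set_hits_both_sides_general (V : Type*) [Fintype V] [DecidableEq V]
    (w : V → V → ℝ) (hw : ∀ u v, 0 ≤ w u v)
    (φ : ℝ) (hφ : 0 < φ) (hφ1 : φ ≤ 1)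
    (U : Finset V) (lam lamt : ℝ) (hlam : 0 < lam) (hlamt : lam ≤ lamt)
    (ℓ : ℕ) (c : V → Fin ℓ)
    (d : V → ℝ) (hd : ∀ v, d v = if v ∈ U then lamt else 0)
    -- (a) each cluster induces a (φ, dᵢ)-expander, dᵢ(v) = d(v) + w(E({v}, V \ Vᵢ))
    (hexp : ∀ i : Fin ℓ, ∀ S ⊆ Finset.univ.filter (fun v => c v = i),
      φ * min (∑ v ∈ S, (d v + edgeW w {v} (Finset.univ.filter (fun v => c v = i))ᶜ))
              (∑ v ∈ Finset.univ.filter (fun v => c v = i) \ S,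
                (d v + edgeW w {v} (Finset.univ.filter (fun v => c v = i))ᶜ))
        ≤ edgeW w S (Finset.univ.filter (fun v => c v = i) \ S))
    -- (b) the min-cut (S₁, S₁ᶜ) makes U (1+1/φ)³-balanced
    (S₁ : Finset V)
    (hS₁cut : cutW w S₁ = lam)
    (hbal₁ : (1 + 1 / φ) ^ 3 ≤ ((S₁ ∩ U).card : ℝ))
    (hbal₂ : (1 + 1 / φ) ^ 3 ≤ ((S₁ᶜ ∩ U).card : ℝ))
    -- construction of U'
    (U' : Finset V)
    (hsmall : ∀ i : Fin ℓ,
      1 ≤ (Finset.univ.filter (fun v => c v = i) ∩ U).card →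
      ((Finset.univ.filter (fun v => c v = i) ∩ U).card : ℝ) ≤ 1 / φ ^ 2 →
      (U' ∩ (Finset.univ.filter (fun v => c v = i) ∩ U)).card = 1)
    (hlarge : ∀ i : Fin ℓ,
      1 / φ ^ 2 < ((Finset.univ.filter (fun v => c v = i) ∩ U).card : ℝ) →
      1 + 1 / φ ≤ ((U' ∩ (Finset.univ.filter (fun v => c v = i) ∩ U)).card : ℝ)) :
    (S₁ ∩ U').Nonempty ∧ (S₁ᶜ ∩ U').Nonempty := by
  have hsum := sum_min_card_le_inv c U hw hφ (hlam.trans_le hlamt) hd hexp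
    (hS₁cut.trans_le hlamt)
  refine ⟨inter_nonempty_of_sum_min_card_le c U hφ hφ1 hsum hbal₁ hsmall hlarge,
    inter_nonempty_of_sum_min_card_le c U hφ hφ1 ?_ hbal₂ hsmall hlarge⟩
  simpa only [compl_compl, min_comm] using hsum

/-- If `U` is `(1+1/φ)³`-balanced with witness the min-cut `(S₁, S₁ᶜ)`, and `U'`
picks one vertex from each small cluster (`1 ≤ |Uᵢ| ≤ 1/φ²`) and `1 + 1/φ` vertices from each
large cluster (`|Uᵢ| > 1/φ²`) of a `(φ, dᵢ)`-expander decomposition, then `U'` hits both sides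
of the min-cut. -/
theorem sparsified_set_hits_both_sides (V : Type*) [Fintype V] [DecidableEq V]
    (w : V → V → ℝ) (hw : ∀ u v, 0 ≤ w u v) (hsymm : ∀ u v, w u v = w v u)
    (φ : ℝ) (hφ : 0 < φ) (hφ1 : φ ≤ 1)
    (U : Finset V) (lam lamt : ℝ) (hlam : 0 < lam) (hlamt : lam ≤ lamt)
    (hmin : ∀ S : Finset V, S.Nonempty → S ≠ Finset.univ → lam ≤ cutW w S)
    (ℓ : ℕ) (c : V → Fin ℓ)
    (d : V → ℝ) (hd : ∀ v, d v = if v ∈ U then lamt else 0)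
    -- (a) each cluster induces a (φ, dᵢ)-expander, dᵢ(v) = d(v) + w(E({v}, V \ Vᵢ))
    (hexp : ∀ i : Fin ℓ, ∀ S ⊆ Finset.univ.filter (fun v => c v = i),
      φ * min (∑ v ∈ S, (d v + edgeW w {v} (Finset.univ.filter (fun v => c v = i))ᶜ))
              (∑ v ∈ Finset.univ.filter (fun v => c v = i) \ S,
                (d v + edgeW w {v} (Finset.univ.filter (fun v => c v = i))ᶜ))
        ≤ edgeW w S (Finset.univ.filter (fun v => c v = i) \ S))
    -- (b) the min-cut (S₁, S₁ᶜ) makes U (1+1/φ)³-balanced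
    (S₁ : Finset V) (hS₁ : S₁.Nonempty) (hS₁univ : S₁ ≠ Finset.univ)
    (hS₁cut : cutW w S₁ = lam)
    (hbal₁ : (1 + 1 / φ) ^ 3 ≤ ((S₁ ∩ U).card : ℝ))
    (hbal₂ : (1 + 1 / φ) ^ 3 ≤ ((S₁ᶜ ∩ U).card : ℝ))
    -- construction of U'
    (U' : Finset V) (hU'U : U' ⊆ U)
    (hsmall : ∀ i : Fin ℓ,
      1 ≤ (Finset.univ.filter (fun v => c v = i) ∩ U).card →
      ((Finset.univ.filter (fun v => c v = i) ∩ U).card : ℝ) ≤ 1 / φ ^ 2 →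
      (U' ∩ (Finset.univ.filter (fun v => c v = i) ∩ U)).card = 1)
    (hlarge : ∀ i : Fin ℓ,
      1 / φ ^ 2 < ((Finset.univ.filter (fun v => c v = i) ∩ U).card : ℝ) →
      1 + 1 / φ ≤ ((U' ∩ (Finset.univ.filter (fun v => c v = i) ∩ U)).card : ℝ)) :
    (S₁ ∩ U').Nonempty ∧ (S₁ᶜ ∩ U').Nonempty :=
  sparsified_set_hits_both_sides_general V w hw φ hφ hφ1 U lam lamt hlam hlamt ℓ c d hd hexp S₁
    hS₁cut hbal₁ hbal₂ U' hsmall hlarge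
end

section
/- Let G = (V, E, w) be a weighted graph, Vᵢ ⊆ V, and suppose G[Vᵢ] is a (φ, dᵢ)-expander where for every v ∈ Vᵢ, dᵢ(v) ≥ w(E({v}, V \ Vᵢ)). Let (Aᵢ, Bᵢ) be a partition of Vᵢ into nonempty parts with w(E(Aᵢ, V \ Vᵢ)) ≤ w(E(Bᵢ, V \ Vᵢ)). Then w(∂Aᵢ) ≤ (1 + 1/φ) · w(E(Aᵢ, Bᵢ)), where ∂Aᵢ is taken in the full graph G. -/
open Finset

lemma edgeW_union_right {V : Type*} [Fintype V] [DecidableEq V]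
    (w : V → V → ℝ) (X Y Z : Finset V) (h : Disjoint Y Z) :
    edgeW w X (Y ∪ Z) = edgeW w X Y + edgeW w X Z := by
  simp only [edgeW, ← Finset.sum_add_distrib]
  exact Finset.sum_congr rfl fun u _ => Finset.sum_union h

lemma edgeW_singleton_sum {V : Type*} [Fintype V] [DecidableEq V]
    (w : V → V → ℝ) (X Y : Finset V) :
    ∑ v ∈ X, edgeW w {v} Y = edgeW w X Y := by
  simp [edgeW]

/-- If `G[Vᵢ]` is a `(φ, dᵢ)`-expander with `dᵢ(v) ≥ w(E({v}, V \ Vᵢ))`, and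
`(Aᵢ, Bᵢ)` partitions `Vᵢ` into nonempty parts with `w(E(Aᵢ, V \ Vᵢ)) ≤ w(E(Bᵢ, V \ Vᵢ))`,
then `w(∂Aᵢ) ≤ (1 + 1/φ)·w(E(Aᵢ, Bᵢ))`. -/
theorem boundary_of_small_side (V : Type*) [Fintype V] [DecidableEq V]
    (w : V → V → ℝ) (hw : ∀ u v, 0 ≤ w u v) (hsymm : ∀ u v, w u v = w v u)
    (φ : ℝ) (hφ : 0 < φ)
    (Vi : Finset V) (di : V → ℝ)
    (hdi : ∀ v ∈ Vi, edgeW w {v} Viᶜ ≤ di v)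
    (hexp : ∀ S ⊆ Vi,
      φ * min (∑ v ∈ S, di v) (∑ v ∈ Vi \ S, di v) ≤ edgeW w S (Vi \ S))
    (Ai Bi : Finset V) (hA : Ai.Nonempty) (hB : Bi.Nonempty)
    (hABdisj : Disjoint Ai Bi) (hABunion : Ai ∪ Bi = Vi)
    (hchoice : edgeW w Ai Viᶜ ≤ edgeW w Bi Viᶜ) :
    cutW w Ai ≤ (1 + 1 / φ) * edgeW w Ai Bi := by
  have hASub : Ai ⊆ Vi := hABunion ▸ Finset.subset_union_left
  have hBSub : Bi ⊆ Vi := hABunion ▸ Finset.subset_union_right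
  have hViA : Vi \ Ai = Bi := by
    rw [← hABunion, Finset.union_sdiff_cancel_left hABdisj]
  -- Aiᶜ = Bi ∪ Viᶜ
  have hcompl : Aiᶜ = Bi ∪ Viᶜ := by
    ext x
    simp only [Finset.mem_compl, Finset.mem_union]
    constructor
    · intro hx
      by_cases hxV : x ∈ Vi
      · left
        rw [← hABunion] at hxV
        rcases Finset.mem_union.mp hxV with h | h
        · exact absurd h hx
        · exact h
      · right; exact hxV
    · rintro (hx | hx)
      · exact fun hxA => (Finset.disjoint_left.mp hABdisj hxA) hx
      · intro hxA
        exact hx (hASub hxA)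
  have hdisjBV : Disjoint Bi Viᶜ := by
    exact (disjoint_compl_right).mono_left hBSub
  have hcut : cutW w Ai = edgeW w Ai Bi + edgeW w Ai Viᶜ := by
    rw [cutW, hcompl, edgeW_union_right _ _ _ _ hdisjBV]
  -- min of sums of di bounds edgeW Ai Viᶜ
  have hAd : edgeW w Ai Viᶜ ≤ ∑ v ∈ Ai, di v := by
    rw [← edgeW_singleton_sum]
    exact Finset.sum_le_sum fun v hv => hdi v (hASub hv)
  have hBd : edgeW w Ai Viᶜ ≤ ∑ v ∈ Bi, di v := by
    refine hchoice.trans ?_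
    rw [← edgeW_singleton_sum]
    exact Finset.sum_le_sum fun v hv => hdi v (hBSub hv)
  have hmin : edgeW w Ai Viᶜ ≤ min (∑ v ∈ Ai, di v) (∑ v ∈ Vi \ Ai, di v) := by
    rw [hViA]
    exact le_min hAd hBd
  have hkey : φ * edgeW w Ai Viᶜ ≤ edgeW w Ai Bi := by
    calc φ * edgeW w Ai Viᶜ
        ≤ φ * min (∑ v ∈ Ai, di v) (∑ v ∈ Vi \ Ai, di v) :=
          mul_le_mul_of_nonneg_left hmin hφ.le
      _ ≤ edgeW w Ai (Vi \ Ai) := hexp Ai hASub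
      _ = edgeW w Ai Bi := by rw [hViA]
  have : edgeW w Ai Viᶜ ≤ (1 / φ) * edgeW w Ai Bi := by
    rw [div_mul_eq_mul_div, le_div_iff₀ hφ, mul_comm]
    linarith [hkey]
  rw [hcut]
  linarith
end

section
/- Let φ ∈ (0,1] and suppose U is (1+1/φ)³-balanced with witness (S₁, S₂), all large clusters (|Uᵢ| > 1/φ²) satisfy |S₁ ∩ Uᵢ| ≤ 1/φ, there is no cluster with Uᵢ ⊆ S₁ (no black cluster), at most 1 + 1/φ clusters have both |S₁ ∩ Uᵢ| > 0 and |S₂ ∩ Uᵢ| > 0, and every other nonempty cluster has S₁ ∩ Uᵢ = ∅. Then |S₁ ∩ U| ≤ 2(1 + 1/φ)/φ < (1 + 1/φ)³ — a contradiction with balancedness. -/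
open Finset

/-- If `U` is `(1+1/φ)³`-balanced with witness `(S₁, S₂ = S₁ᶜ)`, all large
clusters have `|S₁ ∩ Uᵢ| ≤ 1/φ`, there is no black cluster (`Uᵢ ⊆ S₁`), at most `1 + 1/φ`
clusters are gray (meet both `S₁` and `S₂`) and all other nonempty clusters are white
(`S₁ ∩ Uᵢ = ∅`), then `|S₁ ∩ U| ≤ 2(1+1/φ)/φ < (1+1/φ)³`, a contradiction. -/
theorem no_black_cluster_contradiction (V : Type*) [Fintype V] [DecidableEq V]
    (φ : ℝ) (hφ : 0 < φ) (hφ1 : φ ≤ 1)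
    (U : Finset V) (ℓ : ℕ) (Ui : Fin ℓ → Finset V)
    (hdisj : ∀ i j : Fin ℓ, i ≠ j → Disjoint (Ui i) (Ui j))
    (hunion : (Finset.univ : Finset (Fin ℓ)).biUnion Ui = U)
    (S₁ : Finset V)
    (hbal₁ : (1 + 1 / φ) ^ 3 ≤ ((S₁ ∩ U).card : ℝ))
    (hbal₂ : (1 + 1 / φ) ^ 3 ≤ ((S₁ᶜ ∩ U).card : ℝ))
    -- all large clusters satisfy |S₁ ∩ Uᵢ| ≤ 1/φ
    (hlargeS₁ : ∀ i : Fin ℓ, 1 / φ ^ 2 < ((Ui i).card : ℝ) →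
      ((S₁ ∩ Ui i).card : ℝ) ≤ 1 / φ)
    -- no black cluster
    (hnoblack : ∀ i : Fin ℓ, (Ui i).Nonempty → ¬ Ui i ⊆ S₁)
    -- at most 1 + 1/φ gray clusters
    (hgray : (((Finset.univ : Finset (Fin ℓ)).filter (fun i =>
        (S₁ ∩ Ui i).Nonempty ∧ (S₁ᶜ ∩ Ui i).Nonempty)).card : ℝ) ≤ 1 + 1 / φ)
    -- every other nonempty cluster is white
    (hwhite : ∀ i : Fin ℓ, (Ui i).Nonempty →
      ¬ ((S₁ ∩ Ui i).Nonempty ∧ (S₁ᶜ ∩ Ui i).Nonempty) → S₁ ∩ Ui i = ∅) :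
    ((S₁ ∩ U).card : ℝ) ≤ 2 * (1 + 1 / φ) / φ ∧
    2 * (1 + 1 / φ) / φ < (1 + 1 / φ) ^ 3 ∧
    False := by
  have hφ' : (0:ℝ) < 1/φ := by positivity
  have hcard : (S₁ ∩ U).card = ∑ i, (S₁ ∩ Ui i).card := by
    have hsplit : S₁ ∩ U = (Finset.univ : Finset (Fin ℓ)).biUnion (fun i => S₁ ∩ Ui i) := by
      rw [← hunion]
      ext x
      simp [Finset.mem_biUnion, and_comm, and_left_comm, and_assoc]
    rw [hsplit]
    exact Finset.card_biUnion (fun i _ j _ hij =>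
      ((hdisj i j hij).mono inter_subset_right inter_subset_right))
  have hsum : ((S₁ ∩ U).card : ℝ) = ∑ i, ((S₁ ∩ Ui i).card : ℝ) := by
    rw [hcard]; push_cast; ring
  set G := (Finset.univ : Finset (Fin ℓ)).filter (fun i =>
      (S₁ ∩ Ui i).Nonempty ∧ (S₁ᶜ ∩ Ui i).Nonempty) with hG
  have hfilter : ∑ i ∈ G, ((S₁ ∩ Ui i).card : ℝ) = ∑ i, ((S₁ ∩ Ui i).card : ℝ) := by
    apply Finset.sum_filter_of_ne
    intro i _ hne
    have hne' : (S₁ ∩ Ui i).Nonempty := by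
      rw [Finset.nonempty_iff_ne_empty]
      intro h
      exact hne (by rw [h]; simp)
    have hUne : (Ui i).Nonempty := hne'.mono Finset.inter_subset_right
    by_contra hcon
    exact hne'.ne_empty (hwhite i hUne hcon)
  have hterm : ∀ i ∈ G, ((S₁ ∩ Ui i).card : ℝ) ≤ 1 / φ ^ 2 := by
    intro i _
    by_cases hl : 1 / φ ^ 2 < ((Ui i).card : ℝ)
    · have h1 := hlargeS₁ i hl
      have : 1 / φ ≤ 1 / φ ^ 2 := by
        rw [div_le_div_iff₀ hφ (by positivity)]
        nlinarith
      linarith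
    · push_neg at hl
      calc ((S₁ ∩ Ui i).card : ℝ) ≤ ((Ui i).card : ℝ) := by
            exact_mod_cast Finset.card_le_card Finset.inter_subset_right
        _ ≤ 1 / φ ^ 2 := hl
  have hbound : ((S₁ ∩ U).card : ℝ) ≤ (1 + 1/φ) * (1 / φ ^ 2) := by
    rw [hsum, ← hfilter]
    calc ∑ i ∈ G, ((S₁ ∩ Ui i).card : ℝ) ≤ G.card • (1 / φ ^ 2) :=
          Finset.sum_le_card_nsmul _ _ _ hterm
      _ = (G.card : ℝ) * (1 / φ ^ 2) := by rw [nsmul_eq_mul]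
      _ ≤ (1 + 1/φ) * (1 / φ ^ 2) := by
          apply mul_le_mul_of_nonneg_right hgray (by positivity)
  have hfalse : False := by
    have h2 : (1 + 1/φ) * (1 / φ ^ 2) < (1 + 1/φ) ^ 3 := by
      have h3 : 1 / φ ^ 2 < (1 + 1/φ) ^ 2 := by
        have : (1/φ)^2 = 1/φ^2 := by field_simp
        nlinarith
      nlinarith
    linarith
  exact ⟨hfalse.elim, hfalse.elim, hfalse⟩
end
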